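/- arXiv:1807.05087 — 4 statements merged into one kernel-verified Lean document; each statement's English description precedes it below -/
import Mathlib

section
/- For every symmetric positive function d on ordered pairs of distinct elements of V, the Kullback–Leibler divergence between the node-pair sampling distribution p and the reconstructed distribution p̂ equals the cost J(d) plus a constant independent of d; precisely, D(p‖p̂) = ∑_{u≠v} p(u,v)·log( p(u,v)/(π(u)·π(v)) ) + J(d), where D(p‖p̂) = ∑_{u≠v, p(u,v)>0} p(u,v)·log( p(u,v)/p̂(u,v) ). -/
open Finset

/-- **Graph reconstruction and the cost function.**
The Kullback–Leibler divergence between the node-pair sampling distribution `p`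
and the reconstructed distribution `p̂` equals the cost `J(d)` plus a constant
independent of `d`:
`D(p‖p̂) = ∑_{u≠v} p(u,v)·log(p(u,v)/(π(u)π(v))) + J(d)`. -/
theorem kl_eq_const_add_cost
    {V : Type*} [Fintype V] [DecidableEq V] [Nontrivial V]
    (w : V → V → ℝ)
    (hw_symm : ∀ u v, w u v = w v u)
    (hw_nonneg : ∀ u v, 0 ≤ w u v)
    (hw_diag : ∀ u, w u u = 0)
    (W : ℝ) (hW_def : W = ∑ u : V, ∑ v : V, w u v) (hW_pos : 0 < W)
    (p : V → V → ℝ) (hp : ∀ u v, p u v = w u v / W)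
    (π : V → ℝ) (hπ : ∀ u, 0 < π u)
    (d : V → V → ℝ)
    (hd_symm : ∀ u v, d u v = d v u)
    (hd_pos : ∀ u v, u ≠ v → 0 < d u v)
    (what : V → V → ℝ)
    (hwhat : ∀ u v, u ≠ v → what u v = π u * π v / d u v)
    (hwhat_diag : ∀ u, what u u = 0)
    (What : ℝ) (hWhat : What = ∑ u : V, ∑ v ∈ univ.erase u, what u v)
    (phat : V → V → ℝ) (hphat : ∀ u v, phat u v = what u v / What) :
    (∑ u : V, ∑ v ∈ univ.erase u,
        if 0 < p u v then p u v * Real.log (p u v / phat u v) else 0)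
      = (∑ u : V, ∑ v ∈ univ.erase u, p u v * Real.log (p u v / (π u * π v)))
        + ((∑ u : V, ∑ v ∈ univ.erase u, p u v * Real.log (d u v))
          + Real.log (∑ u : V, ∑ v ∈ univ.erase u, π u * π v / d u v)) := by
  -- What is positive
  have hWhat_pos : 0 < What := by
    rw [hWhat]
    apply Finset.sum_pos _ univ_nonempty
    intro u _
    obtain ⟨v, hv⟩ := exists_ne u
    apply Finset.sum_pos'
    · intro x hx
      rw [hwhat u x (fun h => (mem_erase.mp hx).1 h.symm)]
      exact le_of_lt (div_pos (mul_pos (hπ u) (hπ x))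
        (hd_pos u x (fun h => (mem_erase.mp hx).1 h.symm)))
    · refine ⟨v, mem_erase.mpr ⟨hv, mem_univ v⟩, ?_⟩
      rw [hwhat u v (Ne.symm hv)]
      exact div_pos (mul_pos (hπ u) (hπ v)) (hd_pos u v (Ne.symm hv))
  -- rewrite the log argument as What
  have hsum_eq : (∑ u : V, ∑ v ∈ univ.erase u, π u * π v / d u v) = What := by
    rw [hWhat]
    refine Finset.sum_congr rfl fun u _ => Finset.sum_congr rfl fun v hv => ?_
    rw [hwhat u v (fun h => (mem_erase.mp hv).1 h.symm)]
  -- total probability is 1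
  have hp_sum : (∑ u : V, ∑ v ∈ univ.erase u, p u v) = 1 := by
    have : (∑ u : V, ∑ v ∈ univ.erase u, p u v)
        = (∑ u : V, ∑ v : V, w u v) / W := by
      rw [Finset.sum_div]
      refine Finset.sum_congr rfl fun u _ => ?_
      rw [Finset.sum_div, Finset.sum_erase _ (by rw [hp, hw_diag, zero_div])]
      exact Finset.sum_congr rfl fun v _ => hp u v
    rw [this, ← hW_def, div_self hW_pos.ne']
  rw [hsum_eq]
  have hlogsum : (∑ u : V, ∑ v ∈ univ.erase u, p u v * Real.log What)
      = Real.log What := by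
    simp only [← Finset.sum_mul]
    rw [hp_sum, one_mul]
  have main : (∑ u : V, ∑ v ∈ univ.erase u,
        if 0 < p u v then p u v * Real.log (p u v / phat u v) else 0)
      = ∑ u : V, ∑ v ∈ univ.erase u,
          (p u v * Real.log (p u v / (π u * π v)) + p u v * Real.log (d u v)
            + p u v * Real.log What) := by
    refine Finset.sum_congr rfl fun u _ => Finset.sum_congr rfl fun v hv => ?_
    have huv : u ≠ v := fun h => (mem_erase.mp hv).1 h.symm
    by_cases hpv : 0 < p u v
    · rw [if_pos hpv]
      have hππ : 0 < π u * π v := mul_pos (hπ u) (hπ v)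
      have hd' : 0 < d u v := hd_pos u v huv
      have hphat' : phat u v = π u * π v / d u v / What := by
        rw [hphat, hwhat u v huv]
      rw [hphat', Real.log_div hpv.ne' (by positivity),
        Real.log_div (by positivity) hWhat_pos.ne',
        Real.log_div hππ.ne' hd'.ne',
        Real.log_div hpv.ne' hππ.ne']
      ring
    · have hpz : p u v = 0 := le_antisymm (not_lt.mp hpv)
        (by rw [hp]; exact div_nonneg (hw_nonneg u v) hW_pos.le)
      rw [if_neg hpv, hpz]
      ring
  rw [main]
  simp only [Finset.sum_add_distrib]
  rw [hlogsum]
  ring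
end

section
/- Suppose the ordered pairs of distinct elements of V are partitioned by a finite family ((A_i, B_i))_{i∈I} of pairs of disjoint nonempty subsets of V, in the sense that for every ordered pair (u,v) with u ≠ v there is exactly one i ∈ I such that (u,v) ∈ (A_i × B_i) ∪ (B_i × A_i), and suppose p(A_i,B_i) > 0 for all i ∈ I. Write P_i = 2·p(A_i,B_i) and Q_i = 2·π(A_i)·π(B_i). Then ∑_{i∈I} P_i = 1, the infimum of J(d) over all symmetric functions d that are constant equal to some δ_i > 0 on each block A_i × B_i is attained exactly at δ_i = λ·π(A_i)·π(B_i)/p(A_i,B_i) for some λ > 0, and min over such block-constant d of J(d) = −∑_{i∈I} P_i·log(P_i/Q_i); hence minimizing J over such block-constant distances is equivalent to maximizing ∑_{i∈I} p(A_i,B_i)·log( p(A_i,B_i)/(π(A_i)·π(B_i)) ) over the choice of the family ((A_i,B_i))_{i∈I}. -/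
open Finset

lemma sum_erase_eq_offDiag {V : Type*} [Fintype V] [DecidableEq V] (f : V → V → ℝ) :
    ∑ u : V, ∑ v ∈ univ.erase u, f u v = ∑ x ∈ (univ : Finset V).offDiag, f x.1 x.2 := by
  have h : (univ : Finset V).offDiag = (univ ×ˢ univ).filter (fun x => x.1 ≠ x.2) := by
    ext x; simp [Finset.mem_offDiag]
  rw [h, Finset.sum_filter, Finset.sum_product]
  refine Finset.sum_congr rfl fun u _ => ?_
  rw [← Finset.sum_filter]
  refine Finset.sum_congr ?_ fun _ _ => rfl
  ext v; simp [ne_comm]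

/-- **Optimal representation of a graph by a dendrogram.**
Writing `P i = 2·p(A i, B i)` and `Q i = 2·π(A i)·π(B i)`, one has `∑ i, P i = 1`,
the negative Kullback–Leibler divergence `−∑ i, P i · log (P i / Q i)` equals
`−2·∑ i, p(A i,B i)·log (p(A i,B i)/(π(A i)·π(B i)))`, and for every
block-constant symmetric distance `d` (equal to `δ i > 0` on the block
`A i × B i`), the cost satisfies `J(d) ≥ −∑ i, P i · log (P i / Q i)`, with
equality iff `δ i = λ·π(A i)·π(B i)/p(A i,B i)` for some `λ > 0`.
Hence minimizing `J` over block-constant distances is achieved exactly at these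
`δ`, and is equivalent to maximizing `∑ i, p(A i,B i)·log(p(A i,B i)/(π(A i)·π(B i)))`. -/
theorem optimal_block_constant_distance
    {V : Type*} [Fintype V] [DecidableEq V] [Nontrivial V]
    (w : V → V → ℝ)
    (hw_symm : ∀ u v, w u v = w v u)
    (hw_nonneg : ∀ u v, 0 ≤ w u v)
    (hw_diag : ∀ u, w u u = 0)
    (W : ℝ) (hW_def : W = ∑ u : V, ∑ v : V, w u v) (hW_pos : 0 < W)
    (p : V → V → ℝ) (hp : ∀ u v, p u v = w u v / W)
    (pS : Finset V → Finset V → ℝ)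
    (hpS : ∀ A B : Finset V, pS A B = ∑ u ∈ A, ∑ v ∈ B, p u v)
    (π : V → ℝ) (hπ : ∀ u, 0 < π u) (hπ_sum : ∑ u : V, π u = 1)
    (πS : Finset V → ℝ) (hπS : ∀ A : Finset V, πS A = ∑ u ∈ A, π u)
    {I : Type*} [Fintype I]
    (A B : I → Finset V)
    (hA : ∀ i, (A i).Nonempty) (hB : ∀ i, (B i).Nonempty)
    (hAB : ∀ i, Disjoint (A i) (B i))
    (hpart : ∀ u v : V, u ≠ v →
      ∃! i : I, (u ∈ A i ∧ v ∈ B i) ∨ (u ∈ B i ∧ v ∈ A i))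
    (hp_pos : ∀ i, 0 < pS (A i) (B i))
    (P Q : I → ℝ)
    (hP : ∀ i, P i = 2 * pS (A i) (B i))
    (hQ : ∀ i, Q i = 2 * (πS (A i) * πS (B i)))
    (J : (V → V → ℝ) → ℝ)
    (hJ : ∀ d : V → V → ℝ,
      J d = (∑ u : V, ∑ v ∈ univ.erase u, p u v * Real.log (d u v))
        + Real.log (∑ u : V, ∑ v ∈ univ.erase u, π u * π v / d u v)) :
    (∑ i : I, P i = 1)
    ∧ (-(∑ i : I, P i * Real.log (P i / Q i))
        = -(2 * ∑ i : I, pS (A i) (B i)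
              * Real.log (pS (A i) (B i) / (πS (A i) * πS (B i)))))
    ∧ (∀ δ : I → ℝ, (∀ i, 0 < δ i) →
        ∀ d : V → V → ℝ, (∀ u v, d u v = d v u) →
          (∀ i : I, ∀ u ∈ A i, ∀ v ∈ B i, d u v = δ i) →
            (-(∑ i : I, P i * Real.log (P i / Q i)) ≤ J d
              ∧ (J d = -(∑ i : I, P i * Real.log (P i / Q i))
                  ↔ ∃ lam : ℝ, 0 < lam ∧
                      ∀ i, δ i = lam * (πS (A i) * πS (B i)) / pS (A i) (B i)))) := by
  classical
  have hp_symm : ∀ u v, p u v = p v u := fun u v => by rw [hp, hp, hw_symm]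
  have hπS_posA : ∀ i, 0 < πS (A i) := fun i => by
    rw [hπS]; exact Finset.sum_pos (fun u _ => hπ u) (hA i)
  have hπS_posB : ∀ i, 0 < πS (B i) := fun i => by
    rw [hπS]; exact Finset.sum_pos (fun u _ => hπ u) (hB i)
  have hPpos : ∀ i, 0 < P i := fun i => by rw [hP]; exact mul_pos two_pos (hp_pos i)
  have hQpos : ∀ i, 0 < Q i := fun i => by
    have h1 := hπS_posA i; have h2 := hπS_posB i
    rw [hQ]; exact mul_pos two_pos (mul_pos h1 h2)
  -- the blocks partition the off-diagonal
  set bl : I → Finset (V × V) := fun i => (A i ×ˢ B i) ∪ (B i ×ˢ A i) with hbl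
  have hmem_bl : ∀ i (x : V × V), x ∈ bl i ↔
      (x.1 ∈ A i ∧ x.2 ∈ B i) ∨ (x.1 ∈ B i ∧ x.2 ∈ A i) := by
    intro i x; simp [hbl, Finset.mem_union, Finset.mem_product]
  have hne : ∀ i, ∀ x ∈ bl i, x.1 ≠ x.2 := by
    intro i x hx hxx
    rcases (hmem_bl i x).mp hx with ⟨h1, h2⟩ | ⟨h1, h2⟩ <;> rw [hxx] at h1
    · exact Finset.disjoint_left.mp (hAB i) h1 h2
    · exact Finset.disjoint_left.mp (hAB i) h2 h1
  have hcover : (univ : Finset V).offDiag = univ.biUnion bl := by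
    ext x
    constructor
    · intro hx
      obtain ⟨i, hi, _⟩ := hpart x.1 x.2 (Finset.mem_offDiag.mp hx).2.2
      exact Finset.mem_biUnion.mpr ⟨i, Finset.mem_univ i, (hmem_bl i x).mpr hi⟩
    · intro hx
      obtain ⟨i, _, hxi⟩ := Finset.mem_biUnion.mp hx
      exact Finset.mem_offDiag.mpr ⟨Finset.mem_univ _, Finset.mem_univ _, hne i x hxi⟩
  have hdisj : ((univ : Finset I) : Set I).PairwiseDisjoint bl := by
    intro i _ j _ hij
    refine Finset.disjoint_left.mpr fun x hxi hxj => hij ?_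
    obtain ⟨k, _, huniq⟩ := hpart x.1 x.2 (hne i x hxi)
    rw [huniq i ((hmem_bl i x).mp hxi), huniq j ((hmem_bl j x).mp hxj)]
  have key : ∀ f : V → V → ℝ,
      ∑ u : V, ∑ v ∈ univ.erase u, f u v
        = ∑ i : I, ((∑ u ∈ A i, ∑ v ∈ B i, f u v) + ∑ u ∈ B i, ∑ v ∈ A i, f u v) := by
    intro f
    rw [sum_erase_eq_offDiag, hcover, Finset.sum_biUnion hdisj]
    refine Finset.sum_congr rfl fun i _ => ?_
    have hd : Disjoint (A i ×ˢ B i) (B i ×ˢ A i) := by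
      refine Finset.disjoint_left.mpr fun x hx1 hx2 => ?_
      rw [Finset.mem_product] at hx1 hx2
      exact (Finset.disjoint_left.mp (hAB i)) hx1.1 hx2.1
    rw [hbl, Finset.sum_union hd, Finset.sum_product, Finset.sum_product]
  have hpS_BA : ∀ i, ∑ u ∈ B i, ∑ v ∈ A i, p u v = pS (A i) (B i) := by
    intro i
    rw [hpS, Finset.sum_comm]
    exact Finset.sum_congr rfl fun u _ => Finset.sum_congr rfl fun v _ => hp_symm v u
  -- ∑ P = 1
  have hPsum : ∑ i : I, P i = 1 := by
    have h1 : ∑ u : V, ∑ v ∈ univ.erase u, p u v = 1 := by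
      have : ∀ u : V, ∑ v ∈ univ.erase u, p u v = ∑ v : V, p u v := by
        intro u
        exact Finset.sum_erase _ (by rw [hp, hw_diag, zero_div])
      rw [Finset.sum_congr rfl fun u _ => this u]
      simp only [hp, ← Finset.sum_div]
      rw [← hW_def, div_self hW_pos.ne']
    rw [key] at h1
    rw [← h1]
    refine Finset.sum_congr rfl fun i _ => ?_
    rw [hP, hpS_BA i, hpS]; ring
  refine ⟨hPsum, ?_, ?_⟩
  · -- KL rewriting
    rw [Finset.mul_sum, neg_inj]
    refine Finset.sum_congr rfl fun i _ => ?_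
    have : P i / Q i = pS (A i) (B i) / (πS (A i) * πS (B i)) := by
      rw [hP, hQ, mul_div_mul_left _ _ two_ne_zero]
    rw [this, hP]; ring
  · intro δ hδ d hd_symm hd_block
    -- rewrite the two sums in J
    have hlog : ∑ u : V, ∑ v ∈ univ.erase u, p u v * Real.log (d u v)
        = ∑ i : I, P i * Real.log (δ i) := by
      rw [key]
      refine Finset.sum_congr rfl fun i _ => ?_
      have e1 : ∑ u ∈ A i, ∑ v ∈ B i, p u v * Real.log (d u v)
          = pS (A i) (B i) * Real.log (δ i) := by
        rw [hpS, Finset.sum_mul]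
        refine Finset.sum_congr rfl fun u hu => ?_
        rw [Finset.sum_mul]
        exact Finset.sum_congr rfl fun v hv => by rw [hd_block i u hu v hv]
      have e2 : ∑ u ∈ B i, ∑ v ∈ A i, p u v * Real.log (d u v)
          = pS (A i) (B i) * Real.log (δ i) := by
        rw [← hpS_BA i, Finset.sum_mul]
        refine Finset.sum_congr rfl fun u hu => ?_
        rw [Finset.sum_mul]
        refine Finset.sum_congr rfl fun v hv => ?_
        rw [hd_symm u v, hd_block i v hv u hu]
      rw [e1, e2, hP]; ring
    have hinv : ∑ u : V, ∑ v ∈ univ.erase u, π u * π v / d u v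
        = ∑ i : I, Q i / δ i := by
      rw [key]
      refine Finset.sum_congr rfl fun i _ => ?_
      have e1 : ∑ u ∈ A i, ∑ v ∈ B i, π u * π v / d u v
          = πS (A i) * πS (B i) / δ i := by
        rw [hπS, hπS, Finset.sum_mul_sum, Finset.sum_div]
        refine Finset.sum_congr rfl fun u hu => ?_
        rw [Finset.sum_div]
        exact Finset.sum_congr rfl fun v hv => by rw [hd_block i u hu v hv]
      have e2 : ∑ u ∈ B i, ∑ v ∈ A i, π u * π v / d u v
          = πS (A i) * πS (B i) / δ i := by
        rw [hπS, hπS, mul_comm (∑ u ∈ A i, π u), Finset.sum_mul_sum, Finset.sum_div]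
        refine Finset.sum_congr rfl fun u hu => ?_
        rw [Finset.sum_div]
        refine Finset.sum_congr rfl fun v hv => ?_
        rw [hd_symm u v, hd_block i v hv u hu]
      rw [e1, e2, hQ]; ring
    -- the analytic part
    have hI : Nonempty I := by
      obtain ⟨u, v, huv⟩ := exists_pair_ne V
      exact ⟨(hpart u v huv).exists.choose⟩
    set x : I → ℝ := fun i => Q i / (δ i * P i) with hx
    have hxpos : ∀ i, 0 < x i := fun i => by
      have := hQpos i; have := hδ i; have := hPpos i; positivity
    set S : ℝ := ∑ i : I, Q i / δ i with hS
    have hSx : S = ∑ i : I, P i * x i := by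
      refine Finset.sum_congr rfl fun i _ => ?_
      show Q i / δ i = P i * (Q i / (δ i * P i))
      field_simp [(hPpos i).ne', (hδ i).ne']
    have hSpos : 0 < S := by
      rw [hS]
      refine Finset.sum_pos (fun i _ => by have := hQpos i; have := hδ i; positivity)
        Finset.univ_nonempty
    have hJd : J d = -(∑ i : I, P i * Real.log (P i / Q i))
        + (Real.log S - ∑ i : I, P i * Real.log (x i)) := by
      rw [hJ, hlog, hinv]
      have e1 : ∀ i : I, P i * Real.log (P i / Q i)
          = P i * Real.log (P i) - P i * Real.log (Q i) := fun i => by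
        rw [Real.log_div (hPpos i).ne' (hQpos i).ne']; ring
      have e2 : ∀ i : I, P i * Real.log (x i)
          = P i * Real.log (Q i) - P i * Real.log (δ i) - P i * Real.log (P i) := fun i => by
        have hxi : x i = Q i / (δ i * P i) := rfl
        rw [hxi, Real.log_div (hQpos i).ne' (mul_pos (hδ i) (hPpos i)).ne',
          Real.log_mul (hδ i).ne' (hPpos i).ne']; ring
      have E1 : ∑ i : I, P i * Real.log (P i / Q i)
          = (∑ i : I, P i * Real.log (P i)) - ∑ i : I, P i * Real.log (Q i) := by
        rw [← Finset.sum_sub_distrib]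
        exact Finset.sum_congr rfl fun i _ => e1 i
      have E2 : ∑ i : I, P i * Real.log (x i)
          = ((∑ i : I, P i * Real.log (Q i)) - ∑ i : I, P i * Real.log (δ i))
            - ∑ i : I, P i * Real.log (P i) := by
        rw [← Finset.sum_sub_distrib, ← Finset.sum_sub_distrib]
        exact Finset.sum_congr rfl fun i _ => e2 i
      rw [E1, E2]
      ring
    -- Jensen
    have hmem : ∀ i ∈ (univ : Finset I), x i ∈ Set.Ioi (0:ℝ) := fun i _ => hxpos i
    have hw0 : ∀ i ∈ (univ : Finset I), 0 < P i := fun i _ => hPpos i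
    have jensen : ∑ i : I, P i * Real.log (x i) ≤ Real.log S := by
      have := strictConcaveOn_log_Ioi.concaveOn.le_map_sum (fun i _ => (hPpos i).le)
        hPsum hmem
      simpa [smul_eq_mul, ← hSx] using this
    refine ⟨by rw [hJd]; linarith, ?_⟩
    constructor
    · intro heq
      have hz : Real.log S = ∑ i : I, P i * Real.log (x i) := by
        rw [hJd] at heq; linarith
      have := (strictConcaveOn_log_Ioi.map_sum_eq_iff hw0 hPsum hmem).mp
        (by simpa [smul_eq_mul, ← hSx] using hz)
      refine ⟨1 / S, by positivity, fun i => ?_⟩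
      have hδi := hδ i; have hPi := hPpos i
      have hxi : Q i / (δ i * P i) = S := by
        have h := this i (Finset.mem_univ i)
        simpa [smul_eq_mul, ← hSx] using h
      have hxi2 : Q i = S * (δ i * P i) :=
        (div_eq_iff (by positivity)).mp hxi
      rw [hQ, hP] at hxi2
      rw [eq_div_iff (hp_pos i).ne', one_div, inv_mul_eq_div, eq_div_iff hSpos.ne']
      linear_combination (-1/2 : ℝ) * hxi2
    · rintro ⟨lam, hlam, hlδ⟩
      have hxconst : ∀ i, x i = 1 / lam := by
        intro i
        show Q i / (δ i * P i) = 1 / lam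
        rw [hlδ i, hQ, hP]
        field_simp [(hp_pos i).ne', (hπS_posA i).ne', (hπS_posB i).ne', hlam.ne']
      have hSval : S = 1 / lam := by
        rw [hSx]
        simp only [hxconst]
        rw [← Finset.sum_mul, hPsum, one_mul]
      have : ∑ i : I, P i * Real.log (x i) = Real.log S := by
        simp only [hxconst, hSval]
        rw [← Finset.sum_mul, hPsum, one_mul]
      rw [hJd, this]
      ring
end

section
/- Let C be a partition of V, and suppose γ > max{ p(A,B)/(π(A)·π(B)) : A, B ∈ C, A ≠ B }. Then C is the unique maximizer of Q_γ among all partitions of V that are coarser than C (i.e., all partitions each of whose clusters is a union of clusters of C): every strictly coarser partition P satisfies Q_γ(P) < Q_γ(C). -/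
open Finset

/-- **A partition is the unique maximizer among its coarsenings at high resolution.**
Let `C` be a partition of `V` with at least two clusters and suppose
`γ > p(A,B)/(π(A)·π(B))` for all distinct clusters `A, B ∈ C`. Then every
partition `P` coarser than `C` (each cluster of `P` a union of clusters of `C`)
with `P ≠ C` satisfies `Q_γ(P) < Q_γ(C)`. -/
theorem partition_unique_maximizer_among_coarsenings
    {V : Type*} [Fintype V] [DecidableEq V]
    (w : V → V → ℝ)
    (hw_symm : ∀ u v, w u v = w v u)
    (hw_nonneg : ∀ u v, 0 ≤ w u v)
    (hw_diag : ∀ u, w u u = 0)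
    (W : ℝ) (hW_def : W = ∑ u : V, ∑ v : V, w u v) (hW_pos : 0 < W)
    (p : V → V → ℝ) (hp : ∀ u v, p u v = w u v / W)
    (pS : Finset V → Finset V → ℝ)
    (hpS : ∀ A B : Finset V, pS A B = ∑ u ∈ A, ∑ v ∈ B, p u v)
    (π : V → ℝ) (hπ : ∀ u, 0 < π u)
    (πS : Finset V → ℝ) (hπS : ∀ A : Finset V, πS A = ∑ u ∈ A, π u)
    (γ : ℝ) (hγ0 : 0 < γ)
    (Q : Finset (Finset V) → ℝ)
    (hQ : ∀ P : Finset (Finset V),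
      Q P = ∑ C ∈ P, ∑ u ∈ C, ∑ v ∈ C, (p u v - γ * (π u * π v)))
    (C : Finset (Finset V))
    (hC_ne : ∀ A ∈ C, A.Nonempty)
    (hC_cover : ∀ u : V, ∃! A, A ∈ C ∧ u ∈ A)
    (hC_two : 2 ≤ C.card)
    (hγ : ∀ A ∈ C, ∀ B ∈ C, A ≠ B → pS A B / (πS A * πS B) < γ)
    (P : Finset (Finset V))
    (hP_ne : ∀ D ∈ P, D.Nonempty)
    (hP_cover : ∀ u : V, ∃! D, D ∈ P ∧ u ∈ D)
    (hP_coarser : ∀ D ∈ P, ∃ S : Finset (Finset V), S ⊆ C ∧ D = S.biUnion id)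
    (hP_strict : P ≠ C) :
    Q P < Q C := by
  classical
  -- pairwise disjointness of clusters of C
  have hC_disj : ∀ A ∈ C, ∀ B ∈ C, A ≠ B → ∀ u, u ∈ A → u ∉ B := by
    intro A hA B hB hAB u huA huB
    obtain ⟨D, _, hun⟩ := hC_cover u
    exact hAB ((hun A ⟨hA, huA⟩).trans (hun B ⟨hB, huB⟩).symm)
  set f : Finset V → Finset V → ℝ :=
    fun X Y => ∑ u ∈ X, ∑ v ∈ Y, (p u v - γ * (π u * π v)) with hf
  set T : Finset V → Finset (Finset V) := fun D => C.filter (fun A => A ⊆ D) with hT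
  have hTmem : ∀ D A, A ∈ T D ↔ A ∈ C ∧ A ⊆ D := by
    intro D A; rw [hT]; simp [Finset.mem_filter]
  have hTsub : ∀ D, T D ⊆ C := fun D => Finset.filter_subset _ _
  have hD_eq : ∀ D ∈ P, D = (T D).biUnion id := by
    intro D hD
    obtain ⟨S, hSC, hSD⟩ := hP_coarser D hD
    ext u
    simp only [Finset.mem_biUnion, id]
    constructor
    · intro hu
      have hu' := hu
      rw [hSD] at hu'
      simp only [Finset.mem_biUnion, id] at hu'
      obtain ⟨B, hBS, huB⟩ := hu'
      refine ⟨B, (hTmem D B).mpr ⟨hSC hBS, ?_⟩, huB⟩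
      intro x hx
      rw [hSD]
      exact Finset.mem_biUnion.mpr ⟨B, hBS, hx⟩
    · rintro ⟨B, hB, huB⟩
      exact ((hTmem D B).mp hB).2 huB
  have hccover : ∀ A ∈ C, ∃ D ∈ P, A ∈ T D := by
    intro A hA
    obtain ⟨u, huA⟩ := hC_ne A hA
    obtain ⟨D, ⟨hDP, huD⟩, _⟩ := hP_cover u
    refine ⟨D, hDP, ?_⟩
    have huD' : u ∈ (T D).biUnion id := (hD_eq D hDP) ▸ huD
    obtain ⟨B, hB, huB⟩ := Finset.mem_biUnion.mp huD'
    have hBC : B ∈ C := hTsub D hB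
    have hAB : A = B := by
      by_contra h
      exact hC_disj A hA B hBC h u huA huB
    exact hAB ▸ hB
  have hTdisj : ∀ D ∈ P, ∀ D' ∈ P, D ≠ D' → ∀ A, A ∈ T D → A ∉ T D' := by
    intro D hD D' hD' hne A hAD hAD'
    obtain ⟨hAC, hsub⟩ := (hTmem D A).mp hAD
    obtain ⟨_, hsub'⟩ := (hTmem D' A).mp hAD'
    obtain ⟨u, huA⟩ := hC_ne A hAC
    obtain ⟨D'', _, hun⟩ := hP_cover u
    exact hne ((hun D ⟨hD, hsub huA⟩).trans (hun D' ⟨hD', hsub' huA⟩).symm)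
  have hCeq : C = P.biUnion T := by
    ext A
    simp only [Finset.mem_biUnion]
    constructor
    · exact fun hA => hccover A hA
    · rintro ⟨D, _, hAD⟩; exact hTsub D hAD
  have hpd : ∀ S : Finset (Finset V), S ⊆ C →
      (↑S : Set (Finset V)).PairwiseDisjoint id := by
    intro S hSC A hA B hB hAB
    rw [Function.onFun, Finset.disjoint_left]
    intro u huA huB
    exact hC_disj A (hSC hA) B (hSC hB) hAB u huA huB
  have hfsplit : ∀ S : Finset (Finset V), S ⊆ C →
      f (S.biUnion id) (S.biUnion id) = ∑ A ∈ S, ∑ B ∈ S, f A B := by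
    intro S hSC
    simp only [hf]
    rw [Finset.sum_biUnion (hpd S hSC)]
    refine Finset.sum_congr rfl fun A _ => ?_
    have h1 : ∀ u : V, ∑ v ∈ S.biUnion id, (p u v - γ * (π u * π v))
        = ∑ B ∈ S, ∑ v ∈ B, (p u v - γ * (π u * π v)) :=
      fun u => Finset.sum_biUnion (hpd S hSC)
    simp_rw [h1]
    exact Finset.sum_comm
  have hπS_pos : ∀ A ∈ C, 0 < πS A := by
    intro A hA
    rw [hπS]
    exact Finset.sum_pos (fun u _ => hπ u) (hC_ne A hA)
  have hf_neg : ∀ A ∈ C, ∀ B ∈ C, A ≠ B → f A B < 0 := by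
    intro A hA B hB hAB
    have h1 : f A B = pS A B - γ * (πS A * πS B) := by
      rw [hf, hpS, hπS, hπS]
      rw [Finset.sum_mul, Finset.mul_sum, ← Finset.sum_sub_distrib]
      refine Finset.sum_congr rfl fun u _ => ?_
      rw [Finset.mul_sum, Finset.mul_sum, ← Finset.sum_sub_distrib]
    have h2 : 0 < πS A * πS B := mul_pos (hπS_pos A hA) (hπS_pos B hB)
    have h3 := hγ A hA B hB hAB
    rw [div_lt_iff₀ h2] at h3
    rw [h1]
    linarith
  have hQ' : ∀ P' : Finset (Finset V), Q P' = ∑ D ∈ P', f D D := by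
    intro P'
    rw [hQ]
  have hpdT : (↑P : Set (Finset V)).PairwiseDisjoint T := by
    intro D hD D' hD' hne
    rw [Function.onFun, Finset.disjoint_left]
    intro A hA hA'
    exact hTdisj D hD D' hD' hne A hA hA'
  have hQC : Q C = ∑ D ∈ P, ∑ A ∈ T D, f A A := by
    rw [hQ' C, hCeq, Finset.sum_biUnion hpdT]
  have key : Q P = Q C + ∑ D ∈ P, ∑ A ∈ T D, ∑ B ∈ (T D).erase A, f A B := by
    rw [hQ' P, hQC, ← Finset.sum_add_distrib]
    refine Finset.sum_congr rfl fun D hD => ?_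
    have h1 : f D D = ∑ A ∈ T D, ∑ B ∈ T D, f A B := by
      have h2 := hfsplit (T D) (hTsub D)
      rw [← hD_eq D hD] at h2
      exact h2
    rw [h1, ← Finset.sum_add_distrib]
    refine Finset.sum_congr rfl fun A hA => ?_
    exact (Finset.add_sum_erase (T D) (f A) hA).symm
  -- strictness: some D contains two distinct clusters
  have hexist : ∃ D₀ ∈ P, ∃ A ∈ T D₀, ((T D₀).erase A).Nonempty := by
    by_contra h
    push_neg at h
    apply hP_strict
    have hPC : P ⊆ C := by
      intro D hD
      obtain ⟨u, huD⟩ := hP_ne D hD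
      have huD' : u ∈ (T D).biUnion id := (hD_eq D hD) ▸ huD
      obtain ⟨A, hA, huA⟩ := Finset.mem_biUnion.mp huD'
      have hTD : T D = {A} := by
        apply Finset.eq_singleton_iff_unique_mem.mpr
        refine ⟨hA, fun B hB => ?_⟩
        by_contra hBA
        have : B ∈ (T D).erase A := Finset.mem_erase.mpr ⟨hBA, hB⟩
        rw [h D hD A hA] at this
        exact absurd this (Finset.notMem_empty B)
      have hDA : D = A := by
        rw [hD_eq D hD, hTD]
        simp
      exact hDA ▸ hTsub D hA
    have hCP : C ⊆ P := by
      intro A hA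
      obtain ⟨D, hDP, hAT⟩ := hccover A hA
      obtain ⟨u, huD⟩ := hP_ne D hDP
      have huD' : u ∈ (T D).biUnion id := (hD_eq D hDP) ▸ huD
      obtain ⟨A', hA', _⟩ := Finset.mem_biUnion.mp huD'
      have hAA' : A = A' := by
        by_contra hne
        have : A' ∈ (T D).erase A := Finset.mem_erase.mpr ⟨Ne.symm hne, hA'⟩
        rw [h D hDP A hAT] at this
        exact absurd this (Finset.notMem_empty A')
      have hDA : D = A := by
        have hTD : T D = {A} := by
          apply Finset.eq_singleton_iff_unique_mem.mpr
          refine ⟨hAT, fun B hB => ?_⟩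
          by_contra hBA
          have : B ∈ (T D).erase A := Finset.mem_erase.mpr ⟨hBA, hB⟩
          rw [h D hDP A hAT] at this
          exact absurd this (Finset.notMem_empty B)
        rw [hD_eq D hDP, hTD]
        simp
      exact hDA ▸ hDP
    exact Finset.Subset.antisymm hPC hCP
  have hR : (∑ D ∈ P, ∑ A ∈ T D, ∑ B ∈ (T D).erase A, f A B) < 0 := by
    obtain ⟨D₀, hD₀, A₀, hA₀, hne0⟩ := hexist
    have hinner : ∀ D ∈ P, ∀ A ∈ T D, ∑ B ∈ (T D).erase A, f A B ≤ 0 := by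
      intro D hD A hA
      apply Finset.sum_nonpos
      intro B hB
      exact le_of_lt (hf_neg A (hTsub D hA) B (hTsub D (Finset.mem_of_mem_erase hB))
        (Ne.symm (Finset.ne_of_mem_erase hB)))
    have hmid : ∀ D ∈ P, ∑ A ∈ T D, ∑ B ∈ (T D).erase A, f A B ≤ 0 := by
      intro D hD
      exact Finset.sum_nonpos (fun A hA => hinner D hD A hA)
    have hstrict : ∑ A ∈ T D₀, ∑ B ∈ (T D₀).erase A, f A B < 0 := by
      have h0 : ∑ B ∈ (T D₀).erase A₀, f A₀ B < 0 := by
        apply Finset.sum_neg ?_ hne0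
        intro B hB
        exact hf_neg A₀ (hTsub D₀ hA₀) B (hTsub D₀ (Finset.mem_of_mem_erase hB))
          (Ne.symm (Finset.ne_of_mem_erase hB))
      calc ∑ A ∈ T D₀, ∑ B ∈ (T D₀).erase A, f A B
          < ∑ A ∈ T D₀, (0 : ℝ) :=
            Finset.sum_lt_sum (fun A hA => hinner D₀ hD₀ A hA) ⟨A₀, hA₀, h0⟩
        _ = 0 := Finset.sum_const_zero
    calc (∑ D ∈ P, ∑ A ∈ T D, ∑ B ∈ (T D).erase A, f A B)
        < ∑ D ∈ P, (0 : ℝ) :=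
          Finset.sum_lt_sum (fun D hD => hmid D hD) ⟨D₀, hD₀, hstrict⟩
      _ = 0 := Finset.sum_const_zero
  rw [key]
  linarith
end

section
/- Assume the graph is connected in the sense that p(S, V∖S) > 0 for every nonempty proper subset S of V. Let γ₀ = min{ p(A,B)/(π(A)·π(B)) : A, B ⊆ V nonempty, disjoint, with p(A,B) > 0 }, which is positive. Then for every γ with 0 < γ < γ₀, the trivial partition {V} with a single cluster maximizes the modularity Q_γ over all partitions of V. -/
open Finset

/-- **The trivial partition is optimal at low resolution.**
Assume the graph is connected: `p(S, V∖S) > 0` for every nonempty proper subset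
`S` of `V`. Let `γ₀ = min{ p(A,B)/(π(A)·π(B)) : A, B` nonempty disjoint with
`p(A,B) > 0 }`. Then `γ₀ > 0` and for every `0 < γ < γ₀`, the trivial partition
`{V}` maximizes the modularity `Q_γ` over all partitions of `V`. -/
theorem trivial_partition_maximizer_at_low_resolution
    {V : Type*} [Fintype V] [DecidableEq V] [Nontrivial V]
    (w : V → V → ℝ)
    (hw_symm : ∀ u v, w u v = w v u)
    (hw_nonneg : ∀ u v, 0 ≤ w u v)
    (hw_diag : ∀ u, w u u = 0)
    (W : ℝ) (hW_def : W = ∑ u : V, ∑ v : V, w u v) (hW_pos : 0 < W)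
    (p : V → V → ℝ) (hp : ∀ u v, p u v = w u v / W)
    (pS : Finset V → Finset V → ℝ)
    (hpS : ∀ A B : Finset V, pS A B = ∑ u ∈ A, ∑ v ∈ B, p u v)
    (π : V → ℝ) (hπ : ∀ u, 0 < π u)
    (πS : Finset V → ℝ) (hπS : ∀ A : Finset V, πS A = ∑ u ∈ A, π u)
    (hconn : ∀ S : Finset V, S.Nonempty → S ≠ univ → 0 < pS S Sᶜ)
    (γ₀ : ℝ)
    (hγ₀ : γ₀ = sInf {x : ℝ | ∃ A B : Finset V, A.Nonempty ∧ B.Nonempty ∧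
      Disjoint A B ∧ 0 < pS A B ∧ x = pS A B / (πS A * πS B)})
    (Q : ℝ → Finset (Finset V) → ℝ)
    (hQ : ∀ (γ : ℝ) (P : Finset (Finset V)),
      Q γ P = ∑ C ∈ P, ∑ u ∈ C, ∑ v ∈ C, (p u v - γ * (π u * π v))) :
    0 < γ₀ ∧
      ∀ γ : ℝ, 0 < γ → γ < γ₀ →
        ∀ P : Finset (Finset V),
          (∀ C ∈ P, C.Nonempty) → (∀ u : V, ∃! C, C ∈ P ∧ u ∈ C) →
            Q γ P ≤ Q γ ({univ} : Finset (Finset V)) := by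
  classical
  -- basic positivity facts
  have hp_nonneg : ∀ u v, 0 ≤ p u v := fun u v => by
    rw [hp]; exact div_nonneg (hw_nonneg u v) hW_pos.le
  have hp_symm : ∀ u v, p u v = p v u := fun u v => by rw [hp, hp, hw_symm]
  have hπS_pos : ∀ A : Finset V, A.Nonempty → 0 < πS A := fun A hA => by
    rw [hπS]; exact Finset.sum_pos (fun i _ => hπ i) hA
  have hpS_symm : ∀ A B, pS A B = pS B A := fun A B => by
    rw [hpS, hpS, Finset.sum_comm]
    exact Finset.sum_congr rfl fun v _ => Finset.sum_congr rfl fun u _ => hp_symm u v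
  set S : Set ℝ := {x : ℝ | ∃ A B : Finset V, A.Nonempty ∧ B.Nonempty ∧
      Disjoint A B ∧ 0 < pS A B ∧ x = pS A B / (πS A * πS B)} with hSdef
  have hfin : S.Finite := by
    apply Set.Finite.subset (Set.finite_range
      (fun q : Finset V × Finset V => pS q.1 q.2 / (πS q.1 * πS q.2)))
    rintro x ⟨A, B, -, -, -, -, hx⟩
    exact ⟨(A, B), hx.symm⟩
  have hSne : S.Nonempty := by
    obtain ⟨a, b, hab⟩ := exists_pair_ne V
    refine ⟨pS {a} {a}ᶜ / (πS {a} * πS {a}ᶜ), {a}, {a}ᶜ, Finset.singleton_nonempty a,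
      ⟨b, ?_⟩, disjoint_compl_right, hconn {a} (Finset.singleton_nonempty a) ?_, rfl⟩
    · simp [hab.symm]
    · intro h
      have : b ∈ ({a} : Finset V) := h ▸ Finset.mem_univ b
      exact hab (Finset.mem_singleton.mp this).symm
  have hpos : ∀ x ∈ S, 0 < x := by
    rintro x ⟨A, B, hA, hB, -, hpAB, rfl⟩
    exact div_pos hpAB (mul_pos (hπS_pos A hA) (hπS_pos B hB))
  have hγ₀mem : γ₀ ∈ S := hγ₀ ▸ hSne.csInf_mem hfin
  have hγ₀pos : 0 < γ₀ := hpos _ hγ₀mem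
  refine ⟨hγ₀pos, ?_⟩
  intro γ hγpos hγlt P₀ hP₀ne hP₀cov
  -- key merging inequality
  have key : ∀ A B : Finset V, A.Nonempty → B.Nonempty → Disjoint A B → 0 < pS A B →
      γ * (πS A * πS B) ≤ pS A B := by
    intro A B hA hB hd hpAB
    have hmem : pS A B / (πS A * πS B) ∈ S := ⟨A, B, hA, hB, hd, hpAB, rfl⟩
    have hle : γ₀ ≤ pS A B / (πS A * πS B) := hγ₀ ▸ csInf_le hfin.bddBelow hmem
    have hππ : 0 < πS A * πS B := mul_pos (hπS_pos A hA) (hπS_pos B hB)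
    calc γ * (πS A * πS B) ≤ (pS A B / (πS A * πS B)) * (πS A * πS B) :=
          mul_le_mul_of_nonneg_right (le_of_lt (lt_of_lt_of_le hγlt hle)) hππ.le
      _ = pS A B := div_mul_cancel₀ _ hππ.ne'
  -- cross term formula
  have cross : ∀ A B : Finset V,
      ∑ u ∈ A, ∑ v ∈ B, (p u v - γ * (π u * π v)) = pS A B - γ * (πS A * πS B) := by
    intro A B
    rw [hpS, hπS, hπS, Finset.sum_mul_sum, Finset.mul_sum, ← Finset.sum_sub_distrib]
    refine Finset.sum_congr rfl fun u _ => ?_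
    rw [Finset.mul_sum, ← Finset.sum_sub_distrib]
  -- main induction on number of clusters
  have main : ∀ n : ℕ, ∀ P : Finset (Finset V), P.card ≤ n →
      (∀ C ∈ P, C.Nonempty) → (∀ u : V, ∃! C, C ∈ P ∧ u ∈ C) →
      Q γ P ≤ Q γ ({univ} : Finset (Finset V)) := by
    intro n
    induction n with
    | zero =>
      intro P hcard hne hcov
      obtain ⟨a⟩ := (inferInstance : Nonempty V)
      obtain ⟨C, ⟨hCP, -⟩, -⟩ := hcov a
      exact absurd (Finset.card_eq_zero.mp (Nat.le_zero.mp hcard) ▸ hCP)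
        (Finset.notMem_empty C)
    | succ n ih =>
      intro P hcard hne hcov
      by_cases hsmall : P.card ≤ n
      · exact ih P hsmall hne hcov
      have hcardeq : P.card = n + 1 := le_antisymm hcard (Nat.not_le.mp hsmall)
      -- pairwise disjointness of clusters
      have hdisj : ∀ C ∈ P, ∀ D ∈ P, C ≠ D → Disjoint C D := by
        intro C hC D hD hne'
        rw [Finset.disjoint_left]
        intro x hxC hxD
        obtain ⟨E, -, huniq⟩ := hcov x
        exact hne' ((huniq C ⟨hC, hxC⟩).trans (huniq D ⟨hD, hxD⟩).symm)
      by_cases h1 : P.card = 1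
      · -- single cluster: it must be univ
        obtain ⟨C, hPC⟩ := Finset.card_eq_one.mp h1
        have hCuniv : C = univ := by
          apply Finset.eq_univ_of_forall
          intro u
          obtain ⟨D, ⟨hDP, huD⟩, -⟩ := hcov u
          rw [hPC, Finset.mem_singleton] at hDP
          exact hDP ▸ huD
        rw [hPC, hCuniv]
      · -- at least two clusters: merge two connected ones
        have h2 : 1 < P.card := by omega
        have hn1 : 1 ≤ n := by omega
        obtain ⟨C, hCP⟩ : P.Nonempty := Finset.card_pos.mp (by omega)
        obtain ⟨D₀, hD₀P, hD₀C⟩ := Finset.exists_mem_ne h2 C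
        have hCne : C.Nonempty := hne C hCP
        have hCnuniv : C ≠ univ := by
          obtain ⟨v₀, hv₀⟩ := hne D₀ hD₀P
          intro h
          exact Finset.disjoint_left.mp (hdisj D₀ hD₀P C hCP hD₀C) hv₀ (h ▸ Finset.mem_univ v₀)
        have hpCc : 0 < pS C Cᶜ := hconn C hCne hCnuniv
        -- extract a positive edge from C to its complement
        have hne0 : (∑ u ∈ C, ∑ v ∈ Cᶜ, p u v) ≠ 0 := by rw [← hpS]; exact hpCc.ne'
        obtain ⟨u, huC, hu0⟩ := Finset.exists_ne_zero_of_sum_ne_zero hne0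
        obtain ⟨v, hvCc, hv0⟩ := Finset.exists_ne_zero_of_sum_ne_zero hu0
        have hpuv : 0 < p u v := lt_of_le_of_ne (hp_nonneg u v) (Ne.symm hv0)
        obtain ⟨D, ⟨hDP, hvD⟩, -⟩ := hcov v
        have hDC : D ≠ C := fun h => (Finset.mem_compl.mp hvCc) (h ▸ hvD)
        have hDne : D.Nonempty := hne D hDP
        have hCD : Disjoint C D := hdisj C hCP D hDP (Ne.symm hDC)
        have hpCD : 0 < pS C D := by
          rw [hpS]
          calc (0:ℝ) < p u v := hpuv
            _ ≤ ∑ v' ∈ D, p u v' :=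
              Finset.single_le_sum (fun i _ => hp_nonneg u i) hvD
            _ ≤ ∑ u' ∈ C, ∑ v' ∈ D, p u' v' :=
              Finset.single_le_sum
                (fun i _ => Finset.sum_nonneg fun j _ => hp_nonneg i j) huC
        -- the merged partition
        set R : Finset (Finset V) := (P.erase C).erase D with hR
        set P' : Finset (Finset V) := insert (C ∪ D) R with hP'
        have hDmem : D ∈ P.erase C := Finset.mem_erase.mpr ⟨hDC, hDP⟩
        have hCDnotR : C ∪ D ∉ R := by
          intro h
          have hEP : C ∪ D ∈ P := Finset.mem_of_mem_erase (Finset.mem_of_mem_erase h)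
          have hEC : C ∪ D ≠ C := (Finset.mem_erase.mp (Finset.mem_of_mem_erase h)).1
          obtain ⟨x, hx⟩ := hCne
          exact Finset.disjoint_left.mp (hdisj C hCP (C ∪ D) hEP (Ne.symm hEC)) hx
            (Finset.mem_union_left D hx)
        have hRcard : R.card = n - 1 := by
          rw [hR, Finset.card_erase_of_mem hDmem, Finset.card_erase_of_mem hCP, hcardeq]
          omega
        have hP'card : P'.card ≤ n := by
          calc P'.card ≤ R.card + 1 := Finset.card_insert_le _ _
            _ = n - 1 + 1 := by rw [hRcard]
            _ = n := by omega
        have hP'ne : ∀ E ∈ P', E.Nonempty := by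
          intro E hE
          rcases Finset.mem_insert.mp hE with h | h
          · exact h ▸ hCne.mono Finset.subset_union_left
          · exact hne E (Finset.mem_of_mem_erase (Finset.mem_of_mem_erase h))
        have hP'cov : ∀ x : V, ∃! E, E ∈ P' ∧ x ∈ E := by
          intro x
          obtain ⟨E, ⟨hEP, hxE⟩, huniq⟩ := hcov x
          by_cases hE : E = C ∨ E = D
          · refine ⟨C ∪ D, ⟨Finset.mem_insert_self _ _, ?_⟩, ?_⟩
            · rcases hE with h | h
              · exact Finset.mem_union_left D (h ▸ hxE)
              · exact Finset.mem_union_right C (h ▸ hxE)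
            · rintro F ⟨hFP', hxF⟩
              rcases Finset.mem_insert.mp hFP' with h | h
              · exact h
              · have hFP : F ∈ P := Finset.mem_of_mem_erase (Finset.mem_of_mem_erase h)
                have := huniq F ⟨hFP, hxF⟩
                have hFD : F ≠ D := (Finset.mem_erase.mp h).1
                have hFC : F ≠ C := (Finset.mem_erase.mp (Finset.mem_of_mem_erase h)).1
                rcases hE with hEC | hED
                · exact absurd (this.trans hEC) hFC
                · exact absurd (this.trans hED) hFD
          · push_neg at hE
            refine ⟨E, ⟨Finset.mem_insert_of_mem (Finset.mem_erase.mpr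
              ⟨hE.2, Finset.mem_erase.mpr ⟨hE.1, hEP⟩⟩), hxE⟩, ?_⟩
            rintro F ⟨hFP', hxF⟩
            rcases Finset.mem_insert.mp hFP' with h | h
            · exfalso
              rcases Finset.mem_union.mp (h ▸ hxF) with hx | hx
              · exact hE.1 (huniq C ⟨hCP, hx⟩).symm
              · exact hE.2 (huniq D ⟨hDP, hx⟩).symm
            · exact huniq F ⟨Finset.mem_of_mem_erase (Finset.mem_of_mem_erase h), hxF⟩
        -- modularity comparison
        have hQP : Q γ P = (∑ u ∈ C, ∑ v ∈ C, (p u v - γ * (π u * π v)))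
            + (∑ u ∈ D, ∑ v ∈ D, (p u v - γ * (π u * π v)))
            + ∑ E ∈ R, ∑ u ∈ E, ∑ v ∈ E, (p u v - γ * (π u * π v)) := by
          rw [hQ, ← Finset.sum_erase_add P _ hCP, ← Finset.sum_erase_add (P.erase C) _ hDmem]
          ring
        have hQP' : Q γ P' = (∑ u ∈ C ∪ D, ∑ v ∈ C ∪ D, (p u v - γ * (π u * π v)))
            + ∑ E ∈ R, ∑ u ∈ E, ∑ v ∈ E, (p u v - γ * (π u * π v)) := by
          rw [hQ, hP', Finset.sum_insert hCDnotR]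
        have hunion : (∑ u ∈ C ∪ D, ∑ v ∈ C ∪ D, (p u v - γ * (π u * π v)))
            = (∑ u ∈ C, ∑ v ∈ C, (p u v - γ * (π u * π v)))
            + (∑ u ∈ D, ∑ v ∈ D, (p u v - γ * (π u * π v)))
            + ((pS C D - γ * (πS C * πS D)) + (pS D C - γ * (πS D * πS C))) := by
          rw [← cross, ← cross]
          simp only [Finset.sum_union hCD, Finset.sum_add_distrib]
          ring
        have hkey1 : 0 ≤ pS C D - γ * (πS C * πS D) :=
          sub_nonneg.mpr (key C D hCne hDne hCD hpCD)
        have hkey2 : 0 ≤ pS D C - γ * (πS D * πS C) := by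
          rw [hpS_symm D C, mul_comm (πS D)]
          exact hkey1
        have hle : Q γ P ≤ Q γ P' := by
          rw [hQP, hQP', hunion]
          linarith
        exact hle.trans (ih P' hP'card hP'ne hP'cov)
  exact main P₀.card P₀ le_rfl hP₀ne hP₀cov
end
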